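/- arXiv:1709.01984 — 5 statements merged into one kernel-verified Lean document; each statement's English description precedes it below -/
import Mathlib

section
/- Let A* ∈ ℂ^{M×N} be an isometry, b ∈ ℝ^M with b ≥ 0, and suppose x* ∈ ℂ^N satisfies x* = A (b ⊙ u ⊙ sgn(A* x*)) for some unimodular u ∈ ℂ^M, and moreover ‖x*‖ = ‖b‖. Then |A* x*| = b componentwise. -/
/-!
Put `y = b ⊙ u ⊙ sgn(A* x*)`, so that `|y| = b` and `x* = A y`. Since `A*` is an isometry,
`‖y - A* A y‖² = ‖y‖² - ‖A y‖²`, so `‖A y‖ = ‖x*‖ = ‖b‖ = ‖y‖` forces `y = A* A y = A* x*`,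
and hence `|A* x*| = |y| = b`.
-/

open Matrix Complex BigOperators

noncomputable def csgn (z : ℂ) : ℂ := if z = 0 then 1 else z / (‖z‖ : ℂ)

theorem norm_csgn (z : ℂ) : ‖csgn z‖ = 1 := by
  unfold csgn
  split_ifs with h
  · exact norm_one
  · simp [h]

section

variable {𝕜 E F : Type*} [RCLike 𝕜] [NormedAddCommGroup E] [InnerProductSpace 𝕜 E]
  [FiniteDimensional 𝕜 E] [NormedAddCommGroup F] [InnerProductSpace 𝕜 F] [FiniteDimensional 𝕜 F]

open scoped InnerProductSpace

theorem LinearMap.apply_adjoint_apply_of_norm_adjoint_apply {T : E →ₗ[𝕜] F}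
    (hT : T.adjoint ∘ₗ T = LinearMap.id) {y : F} (hy : ‖T.adjoint y‖ = ‖y‖) :
    T (T.adjoint y) = y := by
  set x := T.adjoint y
  have hinner : ⟪y, T x⟫_𝕜 = (‖x‖ ^ 2 : ℝ) := by
    rw [← LinearMap.adjoint_inner_left, inner_self_eq_norm_sq_to_K]; push_cast; rfl
  have hnorm : ‖T x‖ ^ 2 = ‖x‖ ^ 2 := by
    have : ((‖T x‖ ^ 2 : ℝ) : 𝕜) = (‖x‖ ^ 2 : ℝ) := by
      rw [RCLike.ofReal_pow, ← inner_self_eq_norm_sq_to_K, ← LinearMap.adjoint_inner_left,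
        ← LinearMap.comp_apply, hT, LinearMap.id_apply, inner_self_eq_norm_sq_to_K]
      push_cast; rfl
    exact_mod_cast this
  rw [eq_comm, ← sub_eq_zero, ← norm_eq_zero, ← sq_eq_zero_iff, @norm_sub_sq 𝕜, hinner, hnorm, hy,
    RCLike.ofReal_re]
  ring

end

theorem Matrix.mulVec_conjTranspose_mulVec_of_sum_norm_sq_eq {𝕜 m n : Type*} [RCLike 𝕜]
    [Fintype m] [Fintype n] [DecidableEq m] [DecidableEq n] {V : Matrix m n 𝕜} (hV : Vᴴ * V = 1)
    {y : m → 𝕜} (hy : ∑ i, ‖(Vᴴ *ᵥ y) i‖ ^ 2 = ∑ j, ‖y j‖ ^ 2) :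
    V *ᵥ (Vᴴ *ᵥ y) = y := by
  have hT : (toEuclideanLin V).adjoint ∘ₗ toEuclideanLin V = LinearMap.id := by
    rw [← toEuclideanLin_conjTranspose_eq_adjoint, ← Matrix.toLpLin_mul, hV]
    exact toLpLin_one 2
  have hVy := (toEuclideanLin V).apply_adjoint_apply_of_norm_adjoint_apply hT
    (y := WithLp.toLp 2 y) ?_
  · rw [← toEuclideanLin_conjTranspose_eq_adjoint] at hVy
    exact congrArg WithLp.ofLp hVy
  · rw [← toEuclideanLin_conjTranspose_eq_adjoint, EuclideanSpace.norm_eq, EuclideanSpace.norm_eq,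
      toLpLin_toLp, toLin'_apply, hy]

/-- An AP fixed point `x* = A (b ⊙ u ⊙ sgn(A* x*))` with `‖x*‖ = ‖b‖` satisfies
`|A* x*| = b` componentwise. -/
theorem ap_fixed_point_norm_eq (M N : ℕ) (Astar : Matrix (Fin M) (Fin N) ℂ)
    (hA : Astarᴴ * Astar = 1) (b : Fin M → ℝ) (hb : ∀ j, 0 ≤ b j)
    (u : Fin M → ℂ) (hu : ∀ j, ‖u j‖ = 1)
    (xstar : Fin N → ℂ)
    (hfix : xstar = Astarᴴ.mulVec
      (fun j => (b j : ℂ) * u j * csgn (Astar.mulVec xstar j)))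
    (hnorm : Real.sqrt (∑ i, ‖xstar i‖ ^ 2)
      = Real.sqrt (∑ j, (b j) ^ 2)) :
    ∀ j, ‖Astar.mulVec xstar j‖ = b j := by
  set y : Fin M → ℂ := fun j => (b j : ℂ) * u j * csgn ((Astar *ᵥ xstar) j)
  have hy : ∀ j, ‖y j‖ = b j := fun j => by
    rw [norm_mul, norm_mul, hu, norm_csgn, Complex.norm_of_nonneg (hb j), mul_one, mul_one]
  have hsum : ∑ i, ‖(Astarᴴ *ᵥ y) i‖ ^ 2 = ∑ j, ‖y j‖ ^ 2 := by
    simp only [← hfix, hy]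
    exact (Real.sqrt_inj (by positivity) (by positivity)).mp hnorm
  have hAx : Astar *ᵥ xstar = y := by
    rw [hfix]
    exact mulVec_conjTranspose_mulVec_of_sum_norm_sq_eq hA hsum
  intro j
  rw [hAx, hy]
end

section
/- Let A* ∈ ℂ^{M×N} be an isometry, f ∈ ℂ^N, b = |A* f|. Suppose y* ∈ ℂ^M and u ∈ ℂ^M with |u[j]| = 1 for all j and u[j] = 1 whenever y*[j] ≠ 0, and suppose the DR fixed point equation A* A (2 b ⊙ sgn(y*) ⊙ u − y*) = b ⊙ sgn(y*) ⊙ u holds. Define x̂ = A(2 b ⊙ sgn(y*) ⊙ u − y*) and x* = A y*. If additionally x̂ = e^{iθ} f for some θ ∈ ℝ and e^{iθ} sgn(A* f)[j] = (sgn(y*) ⊙ u)[j] for every j with b[j] ≠ 0, then x* = e^{iθ} f. -/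
open Matrix Complex BigOperators

/-!
The phase identification says `b ⊙ sgn(y*) ⊙ u = e^{iθ} A* f` on the support of `b`, and
trivially off it, since `|z| sgn z = z`. Hence the vector `2 b ⊙ sgn(y*) ⊙ u − y*` is the
reflection `2 A*(e^{iθ} f) − y*`, and applying `A` (with `A A* = 1`) gives
`x̂ = 2 e^{iθ} f − x*`; together with `x̂ = e^{iθ} f` this forces `x* = e^{iθ} f`.
-/

theorem norm_mul_csgn (z : ℂ) : (‖z‖ : ℂ) * csgn z = z := by
  by_cases hz : z = 0
  · simp [hz]
  · have hnorm : (‖z‖ : ℂ) ≠ 0 := by exact_mod_cast norm_ne_zero_iff.mpr hz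
    rw [csgn, if_neg hz, mul_div_cancel₀ _ hnorm]

theorem norm_mul_eq_mul_of_csgn {z w c : ℂ} (h : z ≠ 0 → c * csgn z = w) :
    (‖z‖ : ℂ) * w = c * z := by
  by_cases hz : z = 0
  · simp [hz]
  · rw [← h hz, mul_left_comm, norm_mul_csgn]

theorem conjTranspose_mulVec_eq_of_reflection {m n R : Type*} [Fintype m] [Fintype n]
    [DecidableEq n] [CommRing R] [Star R] {A : Matrix m n R} (hA : Aᴴ * A = 1)
    {x : n → R} {y : m → R} (h : Aᴴ *ᵥ (2 • A *ᵥ x - y) = x) : Aᴴ *ᵥ y = x := by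
  rw [mulVec_sub, mulVec_smul, mulVec_mulVec, hA, one_mulVec, two_nsmul] at h
  linear_combination -h

theorem dr_fixed_point_object_general (M N : ℕ) (Astar : Matrix (Fin M) (Fin N) ℂ)
    (hA : Astarᴴ * Astar = 1) (f : Fin N → ℂ)
    (b : Fin M → ℝ) (hbdef : ∀ j, b j = ‖Astar.mulVec f j‖)
    (ystar u : Fin M → ℂ)
    (xhat xstar : Fin N → ℂ)
    (hxhat : xhat = Astarᴴ.mulVec
      (fun j => 2 * (b j : ℂ) * csgn (ystar j) * u j - ystar j))
    (hxstar : xstar = Astarᴴ.mulVec ystar)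
    (θ : ℝ)
    (hxf : xhat = fun i => Complex.exp (Complex.I * θ) * f i)
    (hphase : ∀ j, b j ≠ 0 →
      Complex.exp (Complex.I * θ) * csgn (Astar.mulVec f j)
        = csgn (ystar j) * u j) :
    xstar = fun i => Complex.exp (Complex.I * θ) * f i := by
  subst hxstar
  set c := Complex.exp (Complex.I * θ)
  have hamp : ∀ j, (b j : ℂ) * csgn (ystar j) * u j = c * (Astar *ᵥ f) j := fun j => by
    rw [hbdef j, mul_assoc]
    refine norm_mul_eq_mul_of_csgn fun hz => hphase j ?_
    rwa [hbdef j, norm_ne_zero_iff]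
  change xhat = c • f at hxf
  change Astarᴴ *ᵥ ystar = c • f
  have hreflect : 2 • Astar *ᵥ (c • f) - ystar
      = fun j => 2 * (b j : ℂ) * csgn (ystar j) * u j - ystar j := by
    funext j
    simp only [mulVec_smul, Pi.sub_apply, Pi.smul_apply, smul_eq_mul]
    linear_combination -2 * hamp j
  refine conjTranspose_mulVec_eq_of_reflection hA ?_
  rw [hreflect, ← hxhat, hxf]

/-- Object-domain part of Proposition 4: if `y*` is a DR fixed point,
`x̂ = A(2 b ⊙ sgn(y*) ⊙ u − y*) = e^{iθ} f` and the Fourier phases agree on the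
support of `b`, then `x* = A y* = e^{iθ} f`. -/
theorem dr_fixed_point_object (M N : ℕ) (Astar : Matrix (Fin M) (Fin N) ℂ)
    (hA : Astarᴴ * Astar = 1) (f : Fin N → ℂ)
    (b : Fin M → ℝ) (hbdef : ∀ j, b j = ‖Astar.mulVec f j‖)
    (ystar u : Fin M → ℂ)
    (hu1 : ∀ j, ‖u j‖ = 1)
    (hu2 : ∀ j, ystar j ≠ 0 → u j = 1)
    (hfix : Astar.mulVec (Astarᴴ.mulVec
        (fun j => 2 * (b j : ℂ) * csgn (ystar j) * u j - ystar j))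
      = fun j => (b j : ℂ) * csgn (ystar j) * u j)
    (xhat xstar : Fin N → ℂ)
    (hxhat : xhat = Astarᴴ.mulVec
      (fun j => 2 * (b j : ℂ) * csgn (ystar j) * u j - ystar j))
    (hxstar : xstar = Astarᴴ.mulVec ystar)
    (θ : ℝ)
    (hxf : xhat = fun i => Complex.exp (Complex.I * θ) * f i)
    (hphase : ∀ j, b j ≠ 0 →
      Complex.exp (Complex.I * θ) * csgn (Astar.mulVec f j)
        = csgn (ystar j) * u j) :
    xstar = fun i => Complex.exp (Complex.I * θ) * f i :=
  dr_fixed_point_object_general M N Astar hA f b hbdef ystar u xhat xstar hxhat hxstar θ hxf hphase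
end

section
/- Let A* ∈ ℂ^{M×N} be an isometry and B* = diag(conj(ω)) A* for some unimodular ω ∈ ℂ^M. Let λ_1 ≥ λ_2 ≥ … ≥ λ_{2N} ≥ 0 be the singular values of the real 2N × M matrix 𝓑 = [Re(B); Im(B)] (stacking real and imaginary parts), where B = (B*)^*. Then λ_k² + λ_{2N+1−k}² = 1 for every k = 1, …, 2N. -/
/-!
Write `S = 𝓑 𝓑ᵀ` with `𝓑 = [Re B; Im B]` and let `J = [0, -1; 1, 0]` be multiplication by `i`
on `ℝ^N × ℝ^N`. Expanding `B Bᴴ` into real and imaginary parts shows that `S + J S Jᵀ` is the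
realification of `B Bᴴ = 1`, i.e. the identity. Hence `1 - S` is orthogonally conjugate to `S`,
so the eigenvalues of `S`, counted with multiplicity, are invariant under `μ ↦ 1 - μ`; for a
decreasing enumeration this forces `μ_k + μ_{2N+1-k} = 1`, and `λ_k² = μ_k` as `S ⪰ 0`.
-/

open Matrix Complex BigOperators Polynomial

theorem Antitone.eq_of_map_univ_val_eq {α : Type*} [PartialOrder α] {n : ℕ} {f g : Fin n → α}
    (hf : Antitone f) (hg : Antitone g)
    (h : Finset.univ.val.map f = Finset.univ.val.map g) : f = g := by
  rw [Fin.univ_val_map, Fin.univ_val_map, Multiset.coe_eq_coe] at h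
  exact List.ofFn_injective (h.eq_of_sortedGE hf.sortedGE_ofFn hg.sortedGE_ofFn)

theorem Antitone.add_rev_eq_of_map_sub {n : ℕ} {a : Fin n → ℝ} (ha : Antitone a) (c : ℝ)
    (h : Finset.univ.val.map (fun k => c - a k) = Finset.univ.val.map a) (k : Fin n) :
    a k + a k.rev = c := by
  have hrev : Antitone fun k : Fin n => c - a k.rev := fun i j hij => by
    simp only [sub_le_sub_iff_left]
    exact ha (Fin.rev_le_rev.2 hij)
  have hmap : Finset.univ.val.map (fun k : Fin n => c - a k.rev) = Finset.univ.val.map a := by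
    rw [← h]
    conv_rhs => rw [← Multiset.map_univ_val_equiv Fin.revPerm, Multiset.map_map]
    rfl
  have := congrFun (hrev.eq_of_map_univ_val_eq ha hmap) k
  linarith

namespace Matrix

theorem charpoly_one_sub_eq_of_add_conj_eq_one {R n : Type*} [CommRing R] [Fintype n]
    [DecidableEq n] {A V W : Matrix n n R} (hVW : W * V = 1) (h : A + V * A * W = 1) :
    (1 - A).charpoly = A.charpoly := by
  rw [← h, add_sub_cancel_left, charpoly_mul_comm, ← Matrix.mul_assoc, hVW, Matrix.one_mul]

namespace IsHermitian

variable {𝕜 n : Type*} [RCLike 𝕜] [Fintype n] [DecidableEq n] {A : Matrix n n 𝕜}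

theorem charpoly_one_sub (hA : A.IsHermitian) :
    (1 - A).charpoly = ∏ i, (X - C ((1 - hA.eigenvalues i : ℝ) : 𝕜)) := by
  have hdiag : (1 : Matrix n n 𝕜) - A = Unitary.conjStarAlgAut 𝕜 _ hA.eigenvectorUnitary
      (diagonal (RCLike.ofReal ∘ fun i => 1 - hA.eigenvalues i)) := by
    conv_lhs =>
      rw [hA.spectral_theorem, ← map_one (Unitary.conjStarAlgAut 𝕜 _ hA.eigenvectorUnitary)]
    rw [← map_sub, ← diagonal_one, diagonal_sub]
    congr 2
    ext i
    simp
  rw [hdiag, Unitary.conjStarAlgAut_apply, charpoly_mul_comm, ← Matrix.mul_assoc]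
  simp [charpoly_diagonal]

theorem map_one_sub_eigenvalues (hA : A.IsHermitian) (h : (1 - A).charpoly = A.charpoly) :
    Finset.univ.val.map (fun i => 1 - hA.eigenvalues i) = Finset.univ.val.map hA.eigenvalues := by
  have hroots := congrArg Polynomial.roots (hA.charpoly_one_sub.symm.trans (h.trans hA.charpoly_eq))
  rw [roots_prod _ _ (monic_prod_X_sub_C _ _).ne_zero,
    roots_prod _ _ (monic_prod_X_sub_C _ _).ne_zero] at hroots
  simp only [roots_X_sub_C, Multiset.bind_singleton] at hroots
  exact Multiset.map_injective RCLike.ofReal_injective (by rwa [Multiset.map_map, Multiset.map_map])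

end IsHermitian

theorem mul_diagonal_mul_conjTranspose_mul_diagonal {𝕜 m n : Type*} [RCLike 𝕜] [Fintype m]
    [DecidableEq m] (C : Matrix n m 𝕜) {ω : m → 𝕜} (hω : ∀ j, ‖ω j‖ = 1) :
    C * diagonal ω * (C * diagonal ω)ᴴ = C * Cᴴ := by
  have hunit : diagonal ω * diagonal (star ω) = 1 := by
    rw [diagonal_mul_diagonal, ← diagonal_one]
    congr 1
    ext j
    simp [RCLike.mul_conj, hω j]
  rw [conjTranspose_mul, diagonal_conjTranspose, Matrix.mul_assoc, ← Matrix.mul_assoc (diagonal ω),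
    hunit, Matrix.one_mul]

variable {m n : Type*} [Fintype m]

theorem map_re_mul_conjTranspose (B : Matrix n m ℂ) :
    (B * Bᴴ).map re = B.map re * (B.map re)ᵀ + B.map im * (B.map im)ᵀ := by
  ext i i'
  simp [mul_apply, ← Finset.sum_add_distrib]

theorem map_im_mul_conjTranspose (B : Matrix n m ℂ) :
    (B * Bᴴ).map im = B.map im * (B.map re)ᵀ - B.map re * (B.map im)ᵀ := by
  ext i i'
  simp [mul_apply, ← Finset.sum_sub_distrib, neg_add_eq_sub]

def reImStack (B : Matrix n m ℂ) : Matrix (n ⊕ n) m ℝ := fromRows (B.map re) (B.map im)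

/-- Multiplication by `i` on `ℂ^n ≅ ℝ^n × ℝ^n`. -/
def complexStructure (n : Type*) [DecidableEq n] : Matrix (n ⊕ n) (n ⊕ n) ℝ :=
  fromBlocks 0 (-1) 1 0

theorem complexStructure_transpose_mul_self [Fintype n] [DecidableEq n] :
    (complexStructure n)ᵀ * complexStructure n = 1 := by
  simp [complexStructure, fromBlocks_transpose, fromBlocks_multiply, ← fromBlocks_one]

theorem reImStack_gram_add_conj [Fintype n] [DecidableEq n] (B : Matrix n m ℂ) :
    reImStack B * (reImStack B)ᵀ
        + complexStructure n * (reImStack B * (reImStack B)ᵀ) * (complexStructure n)ᵀ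
      = fromBlocks ((B * Bᴴ).map re) (-(B * Bᴴ).map im) ((B * Bᴴ).map im) ((B * Bᴴ).map re) := by
  rw [map_re_mul_conjTranspose, map_im_mul_conjTranspose, reImStack, complexStructure,
    transpose_fromRows, fromRows_mul_fromCols, fromBlocks_transpose]
  simp only [fromBlocks_multiply, fromBlocks_add, fromBlocks_inj, transpose_zero, transpose_neg,
    transpose_one, Matrix.zero_mul, Matrix.mul_zero, Matrix.one_mul, Matrix.mul_one, Matrix.neg_mul,
    Matrix.mul_neg]
  refine ⟨?_, ?_, ?_, ?_⟩ <;> abel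

theorem reImStack_gram_add_conj_eq_one [Fintype n] [DecidableEq n] {B : Matrix n m ℂ}
    (hB : B * Bᴴ = 1) :
    reImStack B * (reImStack B)ᵀ
        + complexStructure n * (reImStack B * (reImStack B)ᵀ) * (complexStructure n)ᵀ = 1 := by
  rw [reImStack_gram_add_conj, hB]
  simp [← fromBlocks_one, ← Matrix.ext_iff, one_apply, apply_ite]

end Matrix

/-- Singular-value pairing for the realification `𝓑 = [Re B; Im B]` of a complex
isometry `B* = diag(conj ω) A*`: the decreasingly ordered singular values `λ_k` of
`𝓑` satisfy `λ_k² + λ_{2N+1−k}² = 1`. Here `a` is a decreasing enumeration of the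
eigenvalues of `𝓑 𝓑ᵀ` and `λ_k = √(a k)`. -/
theorem singular_value_pairing (M N : ℕ) (Astar : Matrix (Fin M) (Fin N) ℂ)
    (hA : Astarᴴ * Astar = 1) (ω : Fin M → ℂ) (hω : ∀ j, ‖ω j‖ = 1)
    (B : Matrix (Fin N) (Fin M) ℂ)
    (hB : B = Astarᴴ * Matrix.diagonal ω)
    (Bcal : Matrix (Fin N ⊕ Fin N) (Fin M) ℝ)
    (hBcal : Bcal = Matrix.of
      (Sum.elim (fun i j => (B i j).re) (fun i j => (B i j).im)))
    (hS : (Bcal * Bcalᵀ).IsHermitian)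
    (a : Fin (2 * N) → ℝ) (ha : Antitone a)
    (hperm : ∃ e : Fin (2 * N) ≃ (Fin N ⊕ Fin N), ∀ k, a k = hS.eigenvalues (e k))
    (lam : Fin (2 * N) → ℝ) (hlam : ∀ k, lam k = Real.sqrt (a k)) :
    ∀ k : Fin (2 * N), lam k ^ 2 + lam k.rev ^ 2 = 1 := by
  obtain ⟨e, hae⟩ := hperm
  have hBB : B * Bᴴ = 1 := by
    rw [hB, mul_diagonal_mul_conjTranspose_mul_diagonal _ hω, conjTranspose_conjTranspose, hA]
  obtain rfl : Bcal = reImStack B := hBcal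
  have hsym := hS.map_one_sub_eigenvalues <| charpoly_one_sub_eq_of_add_conj_eq_one
    complexStructure_transpose_mul_self (reImStack_gram_add_conj_eq_one hBB)
  have hcomp (f : Fin N ⊕ Fin N → ℝ) : Finset.univ.val.map (f ∘ e) = Finset.univ.val.map f := by
    rw [← Multiset.map_map, Multiset.map_univ_val_equiv]
  have hmap : Finset.univ.val.map (fun k => 1 - a k) = Finset.univ.val.map a := by
    rw [show a = hS.eigenvalues ∘ e from funext hae]
    exact (hcomp _).trans (hsym.trans (hcomp _).symm)
  have hnonneg (k : Fin (2 * N)) : 0 ≤ a k := by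
    rw [hae]
    exact (conjTranspose_eq_transpose_of_trivial (reImStack B) ▸
      posSemidef_self_mul_conjTranspose (reImStack B)).eigenvalues_nonneg _
  intro k
  rw [hlam, hlam, Real.sq_sqrt (hnonneg k), Real.sq_sqrt (hnonneg k.rev)]
  exact ha.add_rev_eq_of_map_sub 1 hmap k
end

section
/- Let A* ∈ ℂ^{M×N} be an isometry, f ∈ ℂ^N, B = A diag(sgn(A* f)), and 𝓑 = [Re(B); Im(B)] ∈ ℝ^{2N×M}. Let G(x) = (Re(x), Im(x)) ∈ ℝ^{2N} for x ∈ ℂ^N. Then 𝓑^T G(f) = |A* f| and 𝓑 |A* f| = G(f); consequently G(f)/‖f‖ is a singular vector of 𝓑^T with singular value 1 (assuming f ≠ 0). Moreover 𝓑^T G(−i f) = 0, so G(−i f)/‖f‖ is a singular vector of 𝓑^T with singular value 0. -/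
/-!
With `D = diag(sgn(A* f))` and `B = A D`, one has `B* f = D̄ (A* f) = |A* f|` and
`B |A* f| = A (D |A* f|) = A A* f = f`, the last step because `A*` is an isometry.
Realification turns these into the claims: `𝓑ᵀ G(x) = Re(B* x)` and `𝓑 v = G(B v)` for real `v`,
and `𝓑ᵀ G(−i f) = Re(−i |A* f|) = 0`.
-/

open Matrix Complex BigOperators

/-- Realification map `G(x) = (Re x, Im x)`. -/
def Gr (N : ℕ) (x : Fin N → ℂ) : Fin N ⊕ Fin N → ℝ :=
  Sum.elim (fun i => (x i).re) (fun i => (x i).im)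

open ComplexConjugate

theorem csgn_mul_norm (z : ℂ) : csgn z * ‖z‖ = z := by
  by_cases h : z = 0
  · simp [csgn, h]
  · have : (‖z‖ : ℂ) ≠ 0 := by simpa using h
    simp only [csgn, if_neg h]
    field_simp

theorem conj_csgn_mul_self (z : ℂ) : conj (csgn z) * z = ‖z‖ := by
  by_cases h : z = 0
  · simp [csgn, h]
  · have : (‖z‖ : ℂ) ≠ 0 := by simpa using h
    rw [csgn, if_neg h, map_div₀, conj_ofReal, div_mul_eq_mul_div, mul_comm, mul_conj,
      normSq_eq_norm_sq]
    push_cast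
    field_simp

section PhaseMatrix

variable {m n : Type*} [Fintype m] [Fintype n] [DecidableEq m]

/-- `B = A diag(sgn(A* f))`, where `A = Astarᴴ`. -/
noncomputable def phaseMatrix (Astar : Matrix m n ℂ) (f : n → ℂ) : Matrix n m ℂ :=
  Astarᴴ * diagonal fun j => csgn ((Astar *ᵥ f) j)

theorem phaseMatrix_conjTranspose_mulVec (Astar : Matrix m n ℂ) (f : n → ℂ) :
    (phaseMatrix Astar f)ᴴ *ᵥ f = fun j => (‖(Astar *ᵥ f) j‖ : ℂ) := by
  ext j
  rw [phaseMatrix, conjTranspose_mul, conjTranspose_conjTranspose, diagonal_conjTranspose,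
    ← mulVec_mulVec, mulVec_diagonal]
  exact conj_csgn_mul_self _

theorem phaseMatrix_mulVec_norm [DecidableEq n] {Astar : Matrix m n ℂ}
    (hA : Astarᴴ * Astar = 1) (f : n → ℂ) :
    phaseMatrix Astar f *ᵥ (fun j => (‖(Astar *ᵥ f) j‖ : ℂ)) = f := by
  have hphase : (diagonal fun j => csgn ((Astar *ᵥ f) j)) *ᵥ
      (fun j => (‖(Astar *ᵥ f) j‖ : ℂ)) = Astar *ᵥ f := by
    ext j
    rw [mulVec_diagonal]
    exact csgn_mul_norm _
  rw [phaseMatrix, ← mulVec_mulVec, hphase, mulVec_mulVec, hA, one_mulVec]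

end PhaseMatrix

section Realification

variable {N : ℕ} {m : Type*}

/-- `𝓑 = [Re B; Im B]`. -/
def realBlocks (B : Matrix (Fin N) m ℂ) : Matrix (Fin N ⊕ Fin N) m ℝ :=
  of (Sum.elim (fun i j => (B i j).re) (fun i j => (B i j).im))

theorem realBlocks_transpose_mulVec_Gr (B : Matrix (Fin N) m ℂ) (x : Fin N → ℂ) :
    (realBlocks B)ᵀ *ᵥ Gr N x = fun j => ((Bᴴ *ᵥ x) j).re := by
  ext j
  simp only [realBlocks, Gr, mulVec, dotProduct, transpose_apply, of_apply,
    Fintype.sum_sum_type, Sum.elim_inl, Sum.elim_inr, conjTranspose_apply, re_sum, mul_re,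
    star_def, conj_re, conj_im, ← Finset.sum_add_distrib]
  exact Finset.sum_congr rfl fun i _ => by ring

theorem realBlocks_mulVec [Fintype m] (B : Matrix (Fin N) m ℂ) (v : m → ℝ) :
    realBlocks B *ᵥ v = Gr N (B *ᵥ fun j => (v j : ℂ)) := by
  ext (i | i) <;>
    simp [realBlocks, Gr, mulVec, dotProduct, re_sum, im_sum]

end Realification

theorem leading_singular_vectors_general (M N : ℕ) (Astar : Matrix (Fin M) (Fin N) ℂ)
    (hA : Astarᴴ * Astar = 1) (f : Fin N → ℂ)
    (B : Matrix (Fin N) (Fin M) ℂ)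
    (hB : B = Astarᴴ * Matrix.diagonal (fun j => csgn (Astar.mulVec f j)))
    (Bcal : Matrix (Fin N ⊕ Fin N) (Fin M) ℝ)
    (hBcal : Bcal = Matrix.of
      (Sum.elim (fun i j => (B i j).re) (fun i j => (B i j).im)))
    (b : Fin M → ℝ) (hb : ∀ j, b j = ‖Astar.mulVec f j‖) :
    Bcalᵀ.mulVec (Gr N f) = b ∧
    Bcal.mulVec b = Gr N f ∧
    (Bcal * Bcalᵀ).mulVec (Gr N f) = Gr N f ∧
    Bcalᵀ.mulVec (Gr N (fun i => -Complex.I * f i)) = 0 ∧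
    (Bcal * Bcalᵀ).mulVec (Gr N (fun i => -Complex.I * f i)) = 0 := by
  replace hB : B = phaseMatrix Astar f := hB
  replace hBcal : Bcal = realBlocks B := hBcal
  replace hb : (fun j => (b j : ℂ)) = fun j => (‖(Astar *ᵥ f) j‖ : ℂ) := by simp [hb]
  have hBf : Bᴴ *ᵥ f = fun j => (b j : ℂ) := by
    rw [hb, hB, phaseMatrix_conjTranspose_mulVec]
  have hTf : Bcalᵀ *ᵥ Gr N f = b := by
    rw [hBcal, realBlocks_transpose_mulVec_Gr, hBf]
    simp
  have hBb : Bcal *ᵥ b = Gr N f := by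
    rw [hBcal, realBlocks_mulVec, hb, hB, phaseMatrix_mulVec_norm hA]
  have hTrot : Bcalᵀ *ᵥ Gr N (fun i => -I * f i) = 0 := by
    change Bcalᵀ *ᵥ Gr N ((-I) • f) = 0
    rw [hBcal, realBlocks_transpose_mulVec_Gr, mulVec_smul, hBf]
    ext j
    simp
  refine ⟨hTf, hBb, ?_, hTrot, ?_⟩
  · rw [← mulVec_mulVec, hTf, hBb]
  · rw [← mulVec_mulVec, hTrot, mulVec_zero]

/-- `𝓑ᵀ G(f) = |A* f|`, `𝓑 |A* f| = G(f)`, so `G(f)/‖f‖` is a singular vector of `𝓑ᵀ`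
with singular value `1`; and `𝓑ᵀ G(−i f) = 0`, so `G(−i f)/‖f‖` is a singular vector
with singular value `0`. -/
theorem leading_singular_vectors (M N : ℕ) (Astar : Matrix (Fin M) (Fin N) ℂ)
    (hA : Astarᴴ * Astar = 1) (f : Fin N → ℂ) (hf : f ≠ 0)
    (B : Matrix (Fin N) (Fin M) ℂ)
    (hB : B = Astarᴴ * Matrix.diagonal (fun j => csgn (Astar.mulVec f j)))
    (Bcal : Matrix (Fin N ⊕ Fin N) (Fin M) ℝ)
    (hBcal : Bcal = Matrix.of
      (Sum.elim (fun i j => (B i j).re) (fun i j => (B i j).im)))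
    (b : Fin M → ℝ) (hb : ∀ j, b j = ‖Astar.mulVec f j‖) :
    Bcalᵀ.mulVec (Gr N f) = b ∧
    Bcal.mulVec b = Gr N f ∧
    (Bcal * Bcalᵀ).mulVec (Gr N f) = Gr N f ∧
    Bcalᵀ.mulVec (Gr N (fun i => -Complex.I * f i)) = 0 ∧
    (Bcal * Bcalᵀ).mulVec (Gr N (fun i => -Complex.I * f i)) = 0 :=
  leading_singular_vectors_general M N Astar hA f B hB Bcal hBcal b hb
end

section
/- Let m be an even positive integer, μ ∈ ℂ^{m×m} a unimodular mask, and h = conj(Qμ) ⊙ μ. Suppose h = γ R₁ h = γ R₂ h = R₂R₁ h for some γ ∈ {1, −1}. Then for every x ∈ ℂ^{m×m}, the twin y = Qx ⊙ conj(h) satisfies |Φ(x ⊙ μ)| = |Φ(y ⊙ μ)| componentwise, where Φ is the oversampled DFT. -/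
open Complex BigOperators

/-- One-based index on the grid `Fin n ⊕ Fin n` of size `m = 2n`. -/
def idx1 (n : ℕ) : Fin n ⊕ Fin n → ℕ
  | .inl a => a.val + 1
  | .inr a => n + a.val + 1

/-- Index reversal `k ↦ m+1−k` on `Fin n ⊕ Fin n`. -/
def srev (n : ℕ) : Fin n ⊕ Fin n → Fin n ⊕ Fin n
  | .inl a => .inr a.rev
  | .inr a => .inl a.rev

/-- Conjugate inversion `Q`. -/
def Qop (n : ℕ) (x : (Fin n ⊕ Fin n) → (Fin n ⊕ Fin n) → ℂ) :
    (Fin n ⊕ Fin n) → (Fin n ⊕ Fin n) → ℂ :=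
  fun k₁ k₂ => (starRingEnd ℂ) (x (srev n k₁) (srev n k₂))

/-- Reflector swapping the left/right block-columns. -/
def R1 (n : ℕ) (x : (Fin n ⊕ Fin n) → (Fin n ⊕ Fin n) → ℂ) :
    (Fin n ⊕ Fin n) → (Fin n ⊕ Fin n) → ℂ :=
  fun k₁ k₂ => x k₁ (Sum.swap k₂)

/-- Reflector swapping the top/bottom block-rows. -/
def R2 (n : ℕ) (x : (Fin n ⊕ Fin n) → (Fin n ⊕ Fin n) → ℂ) :
    (Fin n ⊕ Fin n) → (Fin n ⊕ Fin n) → ℂ :=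
  fun k₁ k₂ => x (Sum.swap k₁) k₂

/-- The 2D oversampled DFT of an `m×m` array (`m = 2n`), sampled on the
`(2m−1)×(2m−1)` grid. -/
noncomputable def Phi2 (n : ℕ) (z : (Fin n ⊕ Fin n) → (Fin n ⊕ Fin n) → ℂ)
    (w₁ w₂ : Fin (2 * (2 * n) - 1)) : ℂ :=
  ∑ k₁ : Fin n ⊕ Fin n, ∑ k₂ : Fin n ⊕ Fin n, z k₁ k₂ *
    Complex.exp (-2 * (Real.pi : ℂ) * Complex.I *
      (((idx1 n k₁ : ℕ) : ℂ) * ((w₁ : ℕ) : ℂ) + ((idx1 n k₂ : ℕ) : ℂ) * ((w₂ : ℕ) : ℂ)) /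
      ((2 * (2 * n) - 1 : ℕ) : ℂ))

/-!
Since `idx1 (srev k) = 2n + 1 − idx1 k`, the Fourier kernel at the reversed index is the
conjugate of the original one up to a unimodular phase independent of `k`, so `Φ(Qz)` is a
unimodular multiple of `conj (Φ z)` and `|Φ(Qz)| = |Φ z|`. For the twin, unimodularity of `μ`
gives `Qμ = conj h ⊙ μ`, hence `y ⊙ μ = Qx ⊙ Qμ = Q(x ⊙ μ)`.
-/

lemma norm_sum_conj_comp_mul_eq {ι : Type*} [Fintype ι] (e : ι ≃ ι) (z E : ι → ℂ) {c : ℂ}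
    (hc : ‖c‖ = 1) (hE : ∀ k, E k = c * (starRingEnd ℂ) (E (e k))) :
    ‖∑ k, (starRingEnd ℂ) (z (e k)) * E k‖ = ‖∑ k, z k * E k‖ := by
  have hsum : ∑ k, (starRingEnd ℂ) (z (e k)) * E k
      = c * (starRingEnd ℂ) (∑ k, z (e k) * E (e k)) := by
    rw [map_sum, Finset.mul_sum]
    exact Finset.sum_congr rfl fun k _ => by rw [hE k, map_mul]; ring
  rw [hsum, e.sum_comp (fun k => z k * E k), norm_mul, hc, Complex.norm_conj, one_mul]

lemma srev_involutive (n : ℕ) : Function.Involutive (srev n) := by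
  intro k
  cases k <;> simp [srev]

lemma idx1_srev_add_idx1 (n : ℕ) (k : Fin n ⊕ Fin n) :
    idx1 n (srev n k) + idx1 n k = 2 * n + 1 := by
  cases k with
  | inl a => simp only [srev, idx1, Fin.val_rev]; omega
  | inr a => simp only [srev, idx1, Fin.val_rev]; omega

lemma cast_idx1_srev (n : ℕ) (k : Fin n ⊕ Fin n) :
    (idx1 n (srev n k) : ℂ) = (2 * n + 1 : ℂ) - idx1 n k :=
  eq_sub_of_add_eq (by exact_mod_cast idx1_srev_add_idx1 n k)

noncomputable def phi2Kernel (n : ℕ) (w₁ w₂ : Fin (2 * (2 * n) - 1))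
    (k : (Fin n ⊕ Fin n) × (Fin n ⊕ Fin n)) : ℂ :=
  Complex.exp (-2 * (Real.pi : ℂ) * Complex.I *
    (((idx1 n k.1 : ℕ) : ℂ) * ((w₁ : ℕ) : ℂ) + ((idx1 n k.2 : ℕ) : ℂ) * ((w₂ : ℕ) : ℂ)) /
    ((2 * (2 * n) - 1 : ℕ) : ℂ))

lemma Phi2_eq_sum_phi2Kernel (n : ℕ) (z : (Fin n ⊕ Fin n) → (Fin n ⊕ Fin n) → ℂ)
    (w₁ w₂ : Fin (2 * (2 * n) - 1)) :
    Phi2 n z w₁ w₂ = ∑ k, z k.1 k.2 * phi2Kernel n w₁ w₂ k :=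
  (Fintype.sum_prod_type' _).symm

lemma phi2Kernel_eq_mul_conj_srev (n : ℕ) (w₁ w₂ : Fin (2 * (2 * n) - 1))
    (k : (Fin n ⊕ Fin n) × (Fin n ⊕ Fin n)) :
    phi2Kernel n w₁ w₂ k
      = Complex.exp (-2 * (Real.pi : ℂ) * Complex.I *
          ((2 * n + 1 : ℂ) * (((w₁ : ℕ) : ℂ) + ((w₂ : ℕ) : ℂ))) / ((2 * (2 * n) - 1 : ℕ) : ℂ))
        * (starRingEnd ℂ) (phi2Kernel n w₁ w₂ (srev n k.1, srev n k.2)) := by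
  rw [phi2Kernel, phi2Kernel, cast_idx1_srev, cast_idx1_srev, ← Complex.exp_conj,
    ← Complex.exp_add]
  congr 1
  simp only [map_div₀, map_mul, map_add, map_sub, map_neg, map_one, Complex.conj_I,
    Complex.conj_ofReal, map_natCast, map_ofNat]
  ring

lemma norm_Phi2_Qop (n : ℕ) (z : (Fin n ⊕ Fin n) → (Fin n ⊕ Fin n) → ℂ)
    (w₁ w₂ : Fin (2 * (2 * n) - 1)) :
    ‖Phi2 n (Qop n z) w₁ w₂‖ = ‖Phi2 n z w₁ w₂‖ := by
  rw [Phi2_eq_sum_phi2Kernel, Phi2_eq_sum_phi2Kernel]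
  refine norm_sum_conj_comp_mul_eq
    ((srev_involutive n).toPerm.prodCongr (srev_involutive n).toPerm)
    (fun k => z k.1 k.2) _ ?_ (phi2Kernel_eq_mul_conj_srev n w₁ w₂)
  rw [Complex.norm_exp]
  simp

lemma Qop_mul (n : ℕ) (x μ : (Fin n ⊕ Fin n) → (Fin n ⊕ Fin n) → ℂ) :
    Qop n (fun k₁ k₂ => x k₁ k₂ * μ k₁ k₂) = fun k₁ k₂ => Qop n x k₁ k₂ * Qop n μ k₁ k₂ :=
  funext₂ fun _ _ => map_mul _ _ _

lemma Qop_eq_conj_mul_of_norm_eq_one {n : ℕ} {μ h : (Fin n ⊕ Fin n) → (Fin n ⊕ Fin n) → ℂ}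
    {k₁ k₂ : Fin n ⊕ Fin n} (hμ : ‖μ k₁ k₂‖ = 1)
    (hh : h k₁ k₂ = (starRingEnd ℂ) (Qop n μ k₁ k₂) * μ k₁ k₂) :
    Qop n μ k₁ k₂ = (starRingEnd ℂ) (h k₁ k₂) * μ k₁ k₂ := by
  have hunit : (starRingEnd ℂ) (μ k₁ k₂) * μ k₁ k₂ = 1 := by
    rw [Complex.conj_mul', hμ]; norm_num
  rw [hh, map_mul, Complex.conj_conj, mul_assoc, hunit, mul_one]

theorem twin_image_general (n : ℕ)
    (μ : (Fin n ⊕ Fin n) → (Fin n ⊕ Fin n) → ℂ)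
    (hμ : ∀ k₁ k₂, ‖μ k₁ k₂‖ = 1)
    (h : (Fin n ⊕ Fin n) → (Fin n ⊕ Fin n) → ℂ)
    (hh : ∀ k₁ k₂, h k₁ k₂ = (starRingEnd ℂ) (Qop n μ k₁ k₂) * μ k₁ k₂)
    (x y : (Fin n ⊕ Fin n) → (Fin n ⊕ Fin n) → ℂ)
    (hy : ∀ k₁ k₂, y k₁ k₂ = Qop n x k₁ k₂ * (starRingEnd ℂ) (h k₁ k₂)) :
    ∀ w₁ w₂ : Fin (2 * (2 * n) - 1),
      ‖Phi2 n (fun k₁ k₂ => x k₁ k₂ * μ k₁ k₂) w₁ w₂‖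
        = ‖Phi2 n (fun k₁ k₂ => y k₁ k₂ * μ k₁ k₂) w₁ w₂‖ := by
  intro w₁ w₂
  have htwin : (fun k₁ k₂ => y k₁ k₂ * μ k₁ k₂) = Qop n (fun k₁ k₂ => x k₁ k₂ * μ k₁ k₂) := by
    rw [Qop_mul]
    funext k₁ k₂
    rw [hy, mul_assoc, Qop_eq_conj_mul_of_norm_eq_one (hμ k₁ k₂) (hh k₁ k₂)]
  rw [htwin, norm_Phi2_Qop]

/-- Twin image: if the unimodular mask `μ` has `h = conj(Qμ) ⊙ μ` satisfying the block
symmetry `h = γ R₁ h = γ R₂ h = R₂ R₁ h` with `γ = ±1`, then for any object `x` the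
twin `y = Qx ⊙ conj(h)` produces the same oversampled Fourier magnitudes through `μ`. -/
theorem twin_image (n : ℕ) (hn : 0 < n)
    (μ : (Fin n ⊕ Fin n) → (Fin n ⊕ Fin n) → ℂ)
    (hμ : ∀ k₁ k₂, ‖μ k₁ k₂‖ = 1)
    (h : (Fin n ⊕ Fin n) → (Fin n ⊕ Fin n) → ℂ)
    (hh : ∀ k₁ k₂, h k₁ k₂ = (starRingEnd ℂ) (Qop n μ k₁ k₂) * μ k₁ k₂)
    (γ : ℂ) (hγ : γ = 1 ∨ γ = -1)
    (hsym1 : ∀ k₁ k₂, h k₁ k₂ = γ * R1 n h k₁ k₂)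
    (hsym2 : ∀ k₁ k₂, h k₁ k₂ = γ * R2 n h k₁ k₂)
    (hsym3 : ∀ k₁ k₂, h k₁ k₂ = R2 n (R1 n h) k₁ k₂)
    (x y : (Fin n ⊕ Fin n) → (Fin n ⊕ Fin n) → ℂ)
    (hy : ∀ k₁ k₂, y k₁ k₂ = Qop n x k₁ k₂ * (starRingEnd ℂ) (h k₁ k₂)) :
    ∀ w₁ w₂ : Fin (2 * (2 * n) - 1),
      ‖Phi2 n (fun k₁ k₂ => x k₁ k₂ * μ k₁ k₂) w₁ w₂‖
        = ‖Phi2 n (fun k₁ k₂ => y k₁ k₂ * μ k₁ k₂) w₁ w₂‖ :=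
  twin_image_general n μ hμ h hh x y hy
end
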